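/- For every integer n ≥ 1: f(2^{2n} + 2^{2n+1} + 2^{2n+2}ℤ₂) = 2^{2n−2} + 2^{2n−1} + 2^{2n}ℤ₂ as sets; moreover the n-th iterate satisfies f^[n](2^{2n} + 2^{2n+1} + 2^{2n+2}ℤ₂) = 1 + 2 + 2²ℤ₂. -/

import Mathlib

open Function Set

/-- The cubic polynomial `f(x) = (9/4)·x·(x−1)²` acting on `ℚ₂`. -/
noncomputable def f : ℚ_[2] → ℚ_[2] := fun x => (9 / 4 : ℚ_[2]) * x * (x - 1) ^ 2

section aux

lemma na_le {a b : ℚ_[2]} {r : ℝ} (ha : ‖a‖ ≤ r) (hb : ‖b‖ ≤ r) : ‖a + b‖ ≤ r :=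
  le_trans (Padic.nonarchimedean a b) (max_le ha hb)

lemma na_lt {a b : ℚ_[2]} {r : ℝ} (ha : ‖a‖ < r) (hb : ‖b‖ < r) : ‖a + b‖ < r :=
  lt_of_le_of_lt (Padic.nonarchimedean a b) (max_lt ha hb)

lemma norm_two : ‖(2 : ℚ_[2])‖ = 1/2 := by
  have := @Padic.norm_p 2 ⟨Nat.prime_two⟩
  rw [show ((2:ℕ):ℚ_[2]) = 2 by norm_num] at this
  rw [this]; norm_num

lemma norm_add_one {v : ℚ_[2]} (h : ‖v‖ < 1) : ‖v + 1‖ = 1 := by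
  rw [Padic.add_eq_max_of_ne (by rw [norm_one]; exact ne_of_lt h)]
  rw [norm_one]; exact max_eq_right h.le

lemma norm_sub_one {v : ℚ_[2]} (h : ‖v‖ < 1) : ‖v - 1‖ = 1 := by
  rw [sub_eq_add_neg, Padic.add_eq_max_of_ne (by rw [norm_neg, norm_one]; exact ne_of_lt h)]
  rw [norm_neg, norm_one]; exact max_eq_right h.le

lemma norm_nine : ‖(9:ℚ_[2])‖ = 1 := by
  have := norm_add_one (v := (8:ℚ_[2])) (by
    rw [show (8:ℚ_[2]) = 2^3 by norm_num, norm_pow, norm_two]; norm_num)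
  rw [show (8:ℚ_[2]) + 1 = 9 by norm_num] at this
  exact this

lemma norm_four : ‖(4:ℚ_[2])‖ = 1/4 := by
  rw [show (4:ℚ_[2]) = 2^2 by norm_num, norm_pow, norm_two]; norm_num

lemma norm_three : ‖(3:ℚ_[2])‖ ≤ 1 := by
  have := Padic.norm_int_le_one (p := 2) 3; simpa using this

lemma fkey {x y : ℚ_[2]} (hx : ‖x‖ < 1) (hy : ‖y‖ < 1) : ‖f x - f y‖ = 4 * ‖x - y‖ := by
  have h : f x - f y =
      (9/4 : ℚ_[2]) * (((x^2 + x*y + y^2 - 2*x - 2*y) + 1) * (x - y)) := by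
    unfold f; ring
  have h2x : ‖(2:ℚ_[2]) * x‖ < 1 := by rw [norm_mul, norm_two]; nlinarith [norm_nonneg x]
  have h2y : ‖(2:ℚ_[2]) * y‖ < 1 := by rw [norm_mul, norm_two]; nlinarith [norm_nonneg y]
  have hu : ‖x^2 + x*y + y^2 - 2*x - 2*y‖ < 1 := by
    have h1 : ‖x^2‖ < 1 := by rw [norm_pow]; nlinarith [norm_nonneg x]
    have h2 : ‖x*y‖ < 1 := by rw [norm_mul]; nlinarith [norm_nonneg x, norm_nonneg y]
    have h3 : ‖y^2‖ < 1 := by rw [norm_pow]; nlinarith [norm_nonneg y]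
    calc ‖x^2 + x*y + y^2 - 2*x - 2*y‖
        = ‖x^2 + x*y + y^2 + (-(2*x)) + (-(2*y))‖ := by ring_nf
      _ < 1 := by
          apply na_lt (na_lt (na_lt (na_lt h1 h2) h3) _) _
          · rw [norm_neg]; exact h2x
          · rw [norm_neg]; exact h2y
  have h94 : ‖(9/4 : ℚ_[2])‖ = 4 := by
    rw [norm_div, norm_nine, norm_four]; norm_num
  rw [h, norm_mul, norm_mul, h94, norm_add_one hu, one_mul]

/-- Center of the disk at level `k`. -/
noncomputable def c (k : ℕ) : ℚ_[2] := 2 ^ (2*k) + 2 ^ (2*k+1)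

lemma c_eq (k : ℕ) : c k = 3 * 2 ^ (2*k) := by unfold c; ring

lemma norm_two_pow (k : ℕ) : ‖(2:ℚ_[2]) ^ k‖ = (1/2:ℝ) ^ k := by
  rw [norm_pow, norm_two]

lemma norm_c_le (k : ℕ) : ‖c k‖ ≤ (1/2:ℝ) ^ (2*k) := by
  rw [c_eq, norm_mul, norm_two_pow]
  nlinarith [pow_nonneg (by norm_num : (0:ℝ) ≤ 1/2) (2*k), norm_three]

lemma pow_half_le (j k : ℕ) (h : k ≤ j) : ((1:ℝ)/2)^j ≤ (1/2)^k :=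
  pow_le_pow_of_le_one (by norm_num) (by norm_num) h

lemma norm_c_succ_le (k : ℕ) : ‖c (k+1)‖ ≤ 1/4 := by
  have h := norm_c_le (k+1)
  have : (1/2:ℝ)^(2*(k+1)) ≤ 1/4 := by
    calc (1/2:ℝ)^(2*(k+1)) ≤ (1/2:ℝ)^2 := pow_half_le _ 2 (by omega)
      _ = 1/4 := by norm_num
  linarith

lemma fcenter (m : ℕ) : ‖f (c (m+1)) - c m‖ ≤ (1/2:ℝ) ^ (2*m+2) := by
  have h : f (c (m+1)) - c m =
      2^(2*m+3) * ((3 * (9*2^(2*m) - 1) * (18*2^(2*m) - 1) : ℤ) : ℚ_[2]) := by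
    rw [c_eq, c_eq]; push_cast; unfold f; ring
  rw [h, norm_mul, norm_two_pow]
  have h1 : ‖((3 * (9*2^(2*m) - 1) * (18*2^(2*m) - 1) : ℤ) : ℚ_[2])‖ ≤ 1 :=
    Padic.norm_int_le_one _
  calc (1/2:ℝ)^(2*m+3) * ‖((3 * (9*2^(2*m) - 1) * (18*2^(2*m) - 1) : ℤ) : ℚ_[2])‖
      ≤ (1/2:ℝ)^(2*m+3) * 1 := mul_le_mul_of_nonneg_left h1 (by positivity)
    _ ≤ (1/2:ℝ)^(2*m+2) := by rw [mul_one]; exact pow_half_le _ _ (by omega)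

noncomputable def Dset (k : ℕ) : Set ℚ_[2] := {x : ℚ_[2] | ‖x - c k‖ ≤ (1/2:ℝ) ^ (2*k+2)}

lemma image_step (m : ℕ) : f '' Dset (m+1) = Dset m := by
  have hexp : 2*(m+1)+2 = 2*m+4 := by omega
  have hc1 : ‖c (m+1)‖ < 1 := lt_of_le_of_lt (norm_c_succ_le m) (by norm_num)
  have hpow : (4:ℝ) * (1/2)^(2*m+4) = (1/2:ℝ)^(2*m+2) := by
    rw [show 2*m+4 = (2*m+2)+2 by omega, pow_add]; ring
  apply Set.Subset.antisymm
  · rintro _ ⟨x, hx, rfl⟩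
    have hx' : ‖x - c (m+1)‖ ≤ (1/2:ℝ)^(2*m+4) := by rwa [Dset, Set.mem_setOf_eq, hexp] at hx
    have hxn : ‖x‖ < 1 := by
      have h := na_le (a := x - c (m+1)) (b := c (m+1)) (r := 1/4)
        (le_trans hx' (le_trans (pow_half_le _ 2 (by omega)) (by norm_num)))
        (norm_c_succ_le m)
      simp only [sub_add_cancel] at h
      linarith
    show ‖f x - c m‖ ≤ (1/2:ℝ)^(2*m+2)
    have h1 : ‖f x - f (c (m+1))‖ ≤ (1/2:ℝ)^(2*m+2) := by
      rw [fkey hxn hc1, ← hpow]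
      linarith
    have h := na_le (a := f x - f (c (m+1))) (b := f (c (m+1)) - c m) h1 (fcenter m)
    simpa using h
  · intro y hy
    have hy' : ‖y - c m‖ ≤ (1/2:ℝ)^(2*m+2) := hy
    have hym : ‖y - c m‖ ≤ 1 := le_trans hy' (pow_le_one₀ (by norm_num) (by norm_num))
    have hy1 : ‖y‖ ≤ 1 := by
      have h := na_le (a := y - c m) (b := c m) hym
        (le_trans (norm_c_le m) (pow_le_one₀ (by norm_num) (by norm_num)))
      simpa using h
    set y' : ℤ_[2] := ⟨y, hy1⟩ with hy'def
    have hy'coe : ((y' : ℤ_[2]) : ℚ_[2]) = y := rfl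
    set a : ℤ_[2] := ⟨c (m+1), hc1.le⟩ with hadef
    have ha : ((a : ℤ_[2]) : ℚ_[2]) = c (m+1) := rfl
    have hA : ‖((a : ℤ_[2]) : ℚ_[2])‖ ≤ 1/4 := by rw [ha]; exact norm_c_succ_le m
    set F : Polynomial ℤ_[2] :=
      Polynomial.C 9 * Polynomial.X^3 - Polynomial.C 18 * Polynomial.X^2
        + Polynomial.C 9 * Polynomial.X - Polynomial.C (4*y') with hFdef
    have heval : ∀ t : ℤ_[2], F.eval t = 9*t^3 - 18*t^2 + 9*t - 4*y' := by
      intro t; simp [hFdef]; try ring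
    have hderiv : F.derivative.eval a = 27*a^2 - 36*a + 9 := by
      simp [hFdef]; try ring
    have hderivnorm : ‖F.derivative.eval a‖ = 1 := by
      rw [PadicInt.norm_def, hderiv]
      have hcast : ((27*a^2 - 36*a + 9 : ℤ_[2]) : ℚ_[2])
          = 9 * ((3*(c (m+1)) - 1) * ((c (m+1)) - 1)) := by
        simp only [PadicInt.coe_sub, PadicInt.coe_add, PadicInt.coe_mul, PadicInt.coe_pow,
          show ((27 : ℤ_[2]) : ℚ_[2]) = 27 from rfl, show ((36 : ℤ_[2]) : ℚ_[2]) = 36 from rfl,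
          show ((9 : ℤ_[2]) : ℚ_[2]) = 9 from rfl, ha]
        ring
      rw [hcast, norm_mul, norm_mul, norm_nine,
        norm_sub_one (v := 3*(c (m+1))) (by
          rw [norm_mul]
          nlinarith [norm_nonneg (c (m+1)), norm_three, norm_c_succ_le m]),
        norm_sub_one (v := c (m+1)) hc1]
      norm_num
    have hevalnorm : ‖F.eval a‖ < 1 := by
      rw [PadicInt.norm_def, heval]
      have hcast : ((9*a^3 - 18*a^2 + 9*a - 4*y' : ℤ_[2]) : ℚ_[2])
          = ((9*(c (m+1))^3 + (-(18*(c (m+1))^2))) + 9*(c (m+1))) + (-(4*y)) := by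
        simp only [PadicInt.coe_sub, PadicInt.coe_add, PadicInt.coe_mul, PadicInt.coe_pow,
          show ((18 : ℤ_[2]) : ℚ_[2]) = 18 from rfl, show ((4 : ℤ_[2]) : ℚ_[2]) = 4 from rfl,
          show ((9 : ℤ_[2]) : ℚ_[2]) = 9 from rfl, ha, hy'coe]
        ring
      rw [hcast]
      have hAn := norm_nonneg (c (m+1))
      have hAle := norm_c_succ_le m
      have h18 : ‖(18:ℚ_[2])‖ ≤ 1 := by
        have := Padic.norm_int_le_one (p := 2) 18; simpa using this
      apply na_lt (na_lt (na_lt ?_ ?_) ?_) ?_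
      · rw [norm_mul, norm_pow, norm_nine, one_mul]
        have := pow_lt_one₀ hAn (show ‖c (m+1)‖ < 1 by linarith) (three_ne_zero)
        linarith
      · rw [norm_neg, norm_mul, norm_pow]
        nlinarith [norm_nonneg (18:ℚ_[2])]
      · rw [norm_mul, norm_nine, one_mul]; linarith
      · rw [norm_neg, norm_mul, norm_four]
        nlinarith [norm_nonneg y]
    obtain ⟨z, hz0, hzdist, -, -⟩ := hensels_lemma (F := F) (a := a)
      (by rw [Polynomial.coe_aeval_eq_eval, hderivnorm]; simpa using hevalnorm)
    simp only [Polynomial.coe_aeval_eq_eval] at hz0 hzdist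
    set Z : ℚ_[2] := ((z : ℤ_[2]) : ℚ_[2]) with hZdef
    have hZa : ‖Z - c (m+1)‖ < 1 := by
      rw [hderivnorm] at hzdist
      rw [PadicInt.norm_def, PadicInt.coe_sub, ha] at hzdist
      exact hzdist
    have hZn : ‖Z‖ < 1 := by
      have h := na_lt (a := Z - c (m+1)) (b := c (m+1)) (r := 1) hZa hc1
      simpa using h
    have hfZ : f Z = y := by
      have h0 : ((F.eval z : ℤ_[2]) : ℚ_[2]) = 0 := by rw [hz0]; rfl
      rw [heval] at h0
      have h0' : 9*Z^3 - 18*Z^2 + 9*Z - 4*y = 0 := by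
        rw [← h0]
        simp only [PadicInt.coe_sub, PadicInt.coe_add, PadicInt.coe_mul, PadicInt.coe_pow,
          show ((18 : ℤ_[2]) : ℚ_[2]) = 18 from rfl, show ((4 : ℤ_[2]) : ℚ_[2]) = 4 from rfl,
          show ((9 : ℤ_[2]) : ℚ_[2]) = 9 from rfl, hy'coe, ← hZdef]
      have h1 : f Z - y = 0 := by unfold f; linear_combination h0' / 4
      exact sub_eq_zero.mp h1
    refine ⟨Z, ?_, hfZ⟩
    show ‖Z - c (m+1)‖ ≤ (1/2:ℝ)^(2*(m+1)+2)
    rw [hexp]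
    have hd : 4 * ‖Z - c (m+1)‖ = ‖y - f (c (m+1))‖ := by
      rw [← fkey hZn hc1, hfZ]
    have hub : ‖y - f (c (m+1))‖ ≤ (1/2:ℝ)^(2*m+2) := by
      have h2 : ‖c m - f (c (m+1))‖ ≤ (1/2:ℝ)^(2*m+2) := by
        rw [← norm_neg]; simpa [neg_sub] using fcenter m
      have h := na_le (a := y - c m) (b := c m - f (c (m+1))) hy' h2
      simpa using h
    rw [← hpow] at hub
    linarith [hd, hub]

lemma iter_step : ∀ k, f^[k] '' Dset k = Dset 0
  | 0 => by simp
  | (k+1) => by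
      rw [Function.iterate_succ, Set.image_comp, image_step k, iter_step k]

end aux

/-- For every `n ≥ 1`:
`f(2^{2n} + 2^{2n+1} + 2^{2n+2}ℤ₂) = 2^{2n−2} + 2^{2n−1} + 2^{2n}ℤ₂` as sets; moreover
`f^[n](2^{2n} + 2^{2n+1} + 2^{2n+2}ℤ₂) = 1 + 2 + 2²ℤ₂`. -/
theorem stmt10 (n : ℕ) (hn : 1 ≤ n) :
    (f '' {x : ℚ_[2] | ‖x - (2 ^ (2 * n) + 2 ^ (2 * n + 1))‖ ≤ (1 / 2 : ℝ) ^ (2 * n + 2)} =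
        {x : ℚ_[2] | ‖x - (2 ^ (2 * n - 2) + 2 ^ (2 * n - 1))‖ ≤ (1 / 2 : ℝ) ^ (2 * n)}) ∧
    (f^[n] '' {x : ℚ_[2] | ‖x - (2 ^ (2 * n) + 2 ^ (2 * n + 1))‖ ≤ (1 / 2 : ℝ) ^ (2 * n + 2)} =
        {x : ℚ_[2] | ‖x - (1 + 2)‖ ≤ (1 / 2 : ℝ) ^ 2}) := by

  obtain ⟨m, rfl⟩ : ∃ m, n = m + 1 := ⟨n - 1, (Nat.succ_pred_eq_of_pos hn).symm⟩
  have e1 : Dset (m+1) =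
      {x : ℚ_[2] | ‖x - (2 ^ (2 * (m+1)) + 2 ^ (2 * (m+1) + 1))‖ ≤ (1 / 2 : ℝ) ^ (2 * (m+1) + 2)} := rfl
  have e2 : Dset m =
      {x : ℚ_[2] | ‖x - (2 ^ (2 * (m+1) - 2) + 2 ^ (2 * (m+1) - 1))‖ ≤ (1 / 2 : ℝ) ^ (2 * (m+1))} := by
    rw [show 2*(m+1)-2 = 2*m from by omega, show 2*(m+1)-1 = 2*m+1 from by omega,
      show 2*(m+1) = 2*m+2 from by omega]
    rfl
  have e3 : Dset 0 = {x : ℚ_[2] | ‖x - (1 + 2)‖ ≤ (1 / 2 : ℝ) ^ 2} := by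
    unfold Dset c; norm_num
  constructor
  · have h := image_step m
    rwa [e1, e2] at h
  · have h := iter_step (m+1)
    rwa [e1, e3] at h
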